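/- Assume that d+ > d− > 0 satisfy d+ − d− ≥ c√(d+ ln d+), where c > 0 is a sufficiently large absolute constant and d+ is bounded below by a sufficiently large absolute constant. Let p be a skewed probability measure on {−1, 0, 1}. Then P(Z_p < 1) ≤ d+^{−10}; equivalently, P(ψ(Z_p) = 1) ≥ 1 − d+^{−10}. -/

import Mathlib

open Filter Topology

attribute [local instance] Classical.propDecidable

set_option linter.unusedVariables false

noncomputable section

/-! ### Basic functions -/

/-- The clamping function `ψ` restricted to the integers. -/
def psiZ (x : ℤ) : ℤ := max (-1) (min 1 x)

/-- The threshold function `ψ̃` restricted to the integers. -/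
def tpsiZ (x : ℤ) : ℤ := if x ≤ -1 then -1 else 1

/-- `p : ℤ → ℝ` represents a probability measure on `{-1, 0, 1}`. -/
def IsProbOn3 (p : ℤ → ℝ) : Prop :=
  (∀ z, 0 ≤ p z) ∧ (∀ z : ℤ, z ∉ ({-1, 0, 1} : Set ℤ) → p z = 0) ∧ p (-1) + p 0 + p 1 = 1

/-- `p` is skewed: `p(1) ≥ 1 - d₊⁻¹⁰`. -/
def Skewed (dp : ℝ) (p : ℤ → ℝ) : Prop := 1 - (dp ^ 10)⁻¹ ≤ p 1

/-- The point mass at `1`, i.e. `(0,0,1)`. -/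
def delta1 : ℤ → ℝ := fun z => if z = 1 then 1 else 0

/-! ### The operator `T` -/

/-- Convolution of two mass functions on `ℤ`. -/
def convZ (a b : ℤ → ℝ) : ℤ → ℝ := fun z => ∑' w : ℤ, a w * b (z - w)

/-- `n`-fold convolution power (distribution of a sum of `n` i.i.d. copies). -/
def convPow (a : ℤ → ℝ) : ℕ → ℤ → ℝ
  | 0 => fun z => if z = 0 then 1 else 0
  | n + 1 => convZ (convPow a n) a

/-- Poisson mass function with mean `d`. -/
def poisP (d : ℝ) (k : ℕ) : ℝ := Real.exp (-d) * d ^ k / (Nat.factorial k)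

/-- Distribution of `-η` when `η` has distribution `a`. -/
def flipM (a : ℤ → ℝ) : ℤ → ℝ := fun z => a (-z)

/-- The distribution of `Z_p = ∑_{i=1}^{γ₊} η_i - ∑_{i=γ₊+1}^{γ₊+γ₋} η_i` where the `η_i`
are i.i.d. with distribution `p` and `γ₊ ~ Po(d₊)`, `γ₋ ~ Po(d₋)` are independent. -/
def Zdist (dp dm : ℝ) (p : ℤ → ℝ) : ℤ → ℝ := fun z =>
  ∑' k : ℕ, ∑' l : ℕ, poisP dp k * poisP dm l * convZ (convPow p k) (convPow (flipM p) l) z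

/-- The operator `𝒯 = 𝒯_{d₊,d₋}`: the distribution of `ψ(Z_p)`. -/
def Twp (dp dm : ℝ) (p : ℤ → ℝ) : ℤ → ℝ := fun z =>
  if z = 1 then ∑' m : ℕ, Zdist dp dm p (1 + (m : ℤ))
  else if z = 0 then Zdist dp dm p 0
  else if z = -1 then ∑' m : ℕ, Zdist dp dm p (-1 - (m : ℤ))
  else 0

/-- The value `Z` as a function of the outcomes `η : Fin (k+l) → ℤ`, where the first `k`
coordinates form the `γ₊`-group and the remaining `l` the `γ₋`-group. -/
def zsum (k l : ℕ) (η : Fin (k + l) → ℤ) : ℤ :=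
  (∑ j ∈ Finset.univ.filter (fun j : Fin (k + l) => (j : ℕ) < k), η j)
    - ∑ j ∈ Finset.univ.filter (fun j : Fin (k + l) => k ≤ (j : ℕ)), η j

/-- Conditional expectation of
`∑_{i=1}^{γ₊} 1{η_i = -ψ̃(Z)} + ∑_{i=γ₊+1}^{γ₊+γ₋} 1{η_i = ψ̃(Z)}` given `γ₊ = k, γ₋ = l`. -/
def innerPhi (p : ℤ → ℝ) (k l : ℕ) : ℝ :=
  ∑ η ∈ Fintype.piFinset (fun _ : Fin (k + l) => ({-1, 0, 1} : Finset ℤ)),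
    (∏ i, p (η i)) *
      (((Finset.univ.filter (fun i : Fin (k + l) =>
            (i : ℕ) < k ∧ η i = - tpsiZ (zsum k l η))).card : ℝ)
        + ((Finset.univ.filter (fun i : Fin (k + l) =>
            k ≤ (i : ℕ) ∧ η i = tpsiZ (zsum k l η))).card : ℝ))

/-- The functional `φ_{d₊,d₋}`. -/
def phiOp (dp dm : ℝ) (p : ℤ → ℝ) : ℝ :=
  (1 / 2) * ∑' k : ℕ, ∑' l : ℕ, poisP dp k * poisP dm l * innerPhi p k l

/-! ### The L¹-Wasserstein distance on measures on `{-1,0,1}` -/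

/-- `ℓ₁(p,q)`: infimum of `E |X - Y|` over couplings of `p` and `q`. -/
def ell1 (p q : ℤ → ℝ) : ℝ :=
  sInf { r | ∃ ν : ℤ × ℤ → ℝ, (∀ x y, 0 ≤ ν (x, y)) ∧
    (∀ x, ∑ y ∈ ({-1, 0, 1} : Finset ℤ), ν (x, y) = p x) ∧
    (∀ y, ∑ x ∈ ({-1, 0, 1} : Finset ℤ), ν (x, y) = q y) ∧
    r = ∑ x ∈ ({-1, 0, 1} : Finset ℤ), ∑ y ∈ ({-1, 0, 1} : Finset ℤ),
          |(x : ℝ) - (y : ℝ)| * ν (x, y) }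

/-! ### Graphs: restriction, cuts, the core, Warning Propagation -/

/-- Every neighbourhood in a graph on a finite vertex type is finite. -/
noncomputable instance fintypeNeighborSet {V : Type*} [Fintype V] (G : SimpleGraph V) (v : V) :
    Fintype (G.neighborSet v) := Fintype.ofFinite _

/-- The subgraph of `G` consisting of the edges inside `S` (the induced subgraph on `S`,
viewed as a graph on the ambient vertex set; vertices outside `S` are isolated). -/
def restrictG {V : Type*} (G : SimpleGraph V) (S : Set V) : SimpleGraph V where
  Adj x y := G.Adj x y ∧ x ∈ S ∧ y ∈ S
  symm := ⟨fun x y h => ⟨G.adj_symm h.1, h.2.2, h.2.1⟩⟩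
  loopless := ⟨fun x h => G.loopless.irrefl x h.1⟩

/-- `cut(G, σ)` for the boundary condition `σ` on `U`: the least number of edges of `G` joining
vertices of different colours, over all `±1`-colourings `τ` agreeing with `σ` on `U`.
(The set of ordered pairs of adjacent bichromatic vertices has twice the size of the
corresponding edge set.) -/
def cutW {V : Type*} (G : SimpleGraph V) (U : Set V) (σ : V → ℤ) : ℕ :=
  sInf { k | ∃ τ : V → ℤ, (∀ x, τ x = 1 ∨ τ x = -1) ∧ (∀ x ∈ U, τ x = σ x) ∧
    2 * k = {p : V × V | G.Adj p.1 p.2 ∧ τ p.1 ≠ τ p.2}.ncard }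

/-- The defining property of the core. -/
def CoreProp {V : Type*} (G : SimpleGraph V) (σ : V → ℤ) (dp dm c : ℝ) (U : Set V) : Prop :=
  ∀ u ∈ U,
    |(({w | G.Adj u w ∧ σ u * σ w = 1}.ncard : ℝ) - dp)| ≤ c / 4 * Real.sqrt (dp * Real.log dp) ∧
    |(({w | G.Adj u w ∧ σ u * σ w = -1}.ncard : ℝ) - dm)| ≤ c / 4 * Real.sqrt (dp * Real.log dp) ∧
    ({w | G.Adj u w} \ U).ncard ≤ 100

/-- The core: the largest subset satisfying `CoreProp`, i.e. the union of all such subsets. -/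
def coreSet {V : Type*} (G : SimpleGraph V) (σ : V → ℤ) (dp dm c : ℝ) : Set V :=
  ⋃₀ { U | CoreProp G σ dp dm c U }

/-- The sets `C_v^{(t)}`. -/
def CvStage {V : Type*} (G : SimpleGraph V) (K : Set V) (v : V) : ℕ → Set V
  | 0 => {v} ∪ {w | G.Adj v w}
  | t + 1 => CvStage G K v t ∪ ⋃ u ∈ (CvStage G K v t \ K), {w | G.Adj u w}

/-- The set `C_v = ⋃_t C_v^{(t)}`. -/
def CvSet {V : Type*} (G : SimpleGraph V) (K : Set V) (v : V) : Set V :=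
  ⋃ t, CvStage G K v t

/-- Warning Propagation messages `μ_{v→w}(t | G, σ)` with initial condition `σ` on `U`. -/
def wpMsg {V : Type*} (G : SimpleGraph V) [∀ v : V, Fintype (G.neighborSet v)]
    (U : Set V) (σ : V → ℤ) : ℕ → V → V → ℤ
  | 0, v, _ => if v ∈ U then σ v else 0
  | t + 1, v, w => psiZ (∑ u ∈ (G.neighborFinset v).erase w, wpMsg G U σ t u v)

/-- `μ_v(t|G,σ) = ∑_{w ∈ ∂v} μ_{w→v}(t|G,σ)`. -/
def wpVal {V : Type*} (G : SimpleGraph V) [∀ v : V, Fintype (G.neighborSet v)]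
    (U : Set V) (σ : V → ℤ) (t : ℕ) (v : V) : ℤ :=
  ∑ w ∈ G.neighborFinset v, wpMsg G U σ t w v

/-- The maximum distance from `w` to any vertex reachable from `w` in `G`. -/
def hgt {V : Type*} (G : SimpleGraph V) (w : V) : ℕ :=
  sSup ((G.dist w) '' { u | G.Reachable w u })

/-- `G_v`: the subgraph of `G` induced on `C_v` (ambient form). -/
def GvG {V : Type*} (G : SimpleGraph V) (K : Set V) (v : V) : SimpleGraph V :=
  restrictG G (CvSet G K v)

/-- `w_{↑v}`: the neighbour of `w` on the path from `w` to `v` in `G_v`. -/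
def parentOf {V : Type*} (G : SimpleGraph V) (K : Set V) (v w : V) : V :=
  @Classical.epsilon V ⟨v⟩ fun x =>
    (GvG G K v).Adj w x ∧ (GvG G K v).dist x v + 1 = (GvG G K v).dist w v

/-- `G_v` with the edge `{w, w_{↑v}}` removed. -/
def GdelG {V : Type*} (G : SimpleGraph V) (K : Set V) (v w : V) : SimpleGraph V :=
  (GvG G K v).deleteEdges {s(w, parentOf G K v w)}

/-- `h_{w→v}`: the maximum distance between `w` and any other vertex of `G_{w→v}`. -/
def hdir {V : Type*} (G : SimpleGraph V) (K : Set V) (v w : V) : ℕ :=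
  hgt (GdelG G K v w) w

/-- `C_{w→v}`: the vertex set of the component of `w` in `G_v` minus the edge `{w, w_{↑v}}`. -/
def Cdir {V : Type*} (G : SimpleGraph V) (K : Set V) (v w : V) : Set V :=
  { u | (GdelG G K v w).Reachable w u }

/-- `G_{w→v}`: the component of `w` in `G_v` minus the edge `{w, w_{↑v}}`. -/
def Gdir {V : Type*} (G : SimpleGraph V) (K : Set V) (v w : V) : SimpleGraph V :=
  restrictG (GdelG G K v w) (Cdir G K v w)

/-- `h_v`: the maximum distance between `v` and any other vertex of `G_v`. -/
def hvG {V : Type*} (G : SimpleGraph V) (K : Set V) (v : V) : ℕ :=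
  hgt (GvG G K v) v

/-- `μ*_{w→v} = μ_{w→w_{↑v}}(h_{w→v}+1 | G, σ)`. -/
def muStarDir {V : Type*} (G : SimpleGraph V) [∀ v : V, Fintype (G.neighborSet v)]
    (K : Set V) (σ : V → ℤ) (v w : V) : ℤ :=
  wpMsg G Set.univ σ (hdir G K v w + 1) w (parentOf G K v w)

/-- `μ*_v = μ_v(h_v+1 | G, σ)`. -/
def muStarV {V : Type*} (G : SimpleGraph V) [∀ v : V, Fintype (G.neighborSet v)]
    (K : Set V) (σ : V → ℤ) (v : V) : ℤ :=
  wpVal G Set.univ σ (hvG G K v + 1) v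

/-- The ball of radius `t` around `v` in `G`. -/
def ballSet {V : Type*} (G : SimpleGraph V) (v : V) (t : ℕ) : Set V :=
  { u | G.Reachable v u ∧ G.dist v u ≤ t }

lemma mem_ballSet_self {V : Type*} (G : SimpleGraph V) (v : V) (t : ℕ) : v ∈ ballSet G v t :=
  ⟨SimpleGraph.Reachable.refl v, by simp [SimpleGraph.dist_self]⟩

/-- `∂^t(G,r,σ) ≅ ∂^t(H,r',τ)`: a root- and label-preserving isomorphism between the
balls of radius `t`. -/
def RootedBallIso {V W : Type*} (G : SimpleGraph V) (σ : V → ℤ) (r : V)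
    (H : SimpleGraph W) (τ : W → ℤ) (r' : W) (t : ℕ) : Prop :=
  ∃ φ : (G.induce (ballSet G r t)) ≃g (H.induce (ballSet H r' t)),
    φ ⟨r, mem_ballSet_self G r t⟩ = ⟨r', mem_ballSet_self H r' t⟩ ∧
    ∀ x, τ (φ x).1 = σ x.1

/-! ### The planted bisection model -/

/-- `σ` is a balanced bipartition: the two class sizes differ by at most one. -/
def BalancedPart {n : ℕ} (σ : Fin n → Bool) : Prop :=
  (((Finset.univ.filter (fun v => σ v = true)).card : ℤ)
    - ((Finset.univ.filter (fun v => σ v = false)).card : ℤ)).natAbs ≤ 1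

/-- The number of balanced bipartitions of `Fin n`. -/
def Nbal (n : ℕ) : ℕ := (Finset.univ.filter (fun σ : Fin n → Bool => BalancedPart σ)).card

/-- The probability `p_{σ(v)σ(w)}` of the edge `{v,w}`, where `p₊ = 2d₊/n`, `p₋ = 2d₋/n`. -/
def pairProb (dp dm : ℝ) (n : ℕ) (σ : Fin n → Bool) (v w : Fin n) : ℝ :=
  if σ v = σ w then 2 * dp / n else 2 * dm / n

/-- The probability mass of an outcome `ω = (σ, g)` of the planted bisection model
`G(n, 2d₊/n, 2d₋/n)`: `σ` is a uniformly random balanced bipartition and, independently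
for each pair `v ≠ w`, the edge `{v,w}` is present with probability `p_{σ(v)σ(w)}`. -/
def pbMass (dp dm : ℝ) (n : ℕ) (ω : (Fin n → Bool) × (Fin n → Fin n → Bool)) : ℝ :=
  (if BalancedPart ω.1 ∧ (∀ v w, ω.2 v w = ω.2 w v) ∧ (∀ v, ω.2 v v = false)
    then ((Nbal n : ℝ))⁻¹ else 0) *
  ∏ p ∈ Finset.univ.filter (fun p : Fin n × Fin n => p.1 < p.2),
    (if ω.2 p.1 p.2 = true then pairProb dp dm n ω.1 p.1 p.2
      else 1 - pairProb dp dm n ω.1 p.1 p.2)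

/-- The probability of an event in the planted bisection model. -/
def pbPr (dp dm : ℝ) (n : ℕ) (A : (Fin n → Bool) × (Fin n → Fin n → Bool) → Prop) : ℝ :=
  ∑ ω ∈ Finset.univ.filter A, pbMass dp dm n ω

/-- Sign of a Boolean, as `±1`. -/
def sgnB (b : Bool) : ℤ := if b then 1 else -1

/-- The planted assignment `σ : [n] → {±1}` of an outcome. -/
def pbSigma {n : ℕ} (ω : (Fin n → Bool) × (Fin n → Fin n → Bool)) : Fin n → ℤ :=
  fun v => sgnB (ω.1 v)

/-- The graph of an outcome. -/
def pbGraph (n : ℕ) (g : Fin n → Fin n → Bool) : SimpleGraph (Fin n) :=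
  SimpleGraph.fromRel fun v w => g v w = true

/-- The minimum bisection width `bis(G)`: the least number of edges joining `S` and its
complement over all `S` with `||S| - |S̄|| ≤ 1`. -/
def bisWidth {n : ℕ} (G : SimpleGraph (Fin n)) : ℕ :=
  sInf { k | ∃ S : Finset (Fin n),
    ((S.card : ℤ) - ((n : ℤ) - (S.card : ℤ))).natAbs ≤ 1 ∧
    k = {p : Fin n × Fin n | G.Adj p.1 p.2 ∧ p.1 ∈ S ∧ p.2 ∉ S}.ncard }

/-! ### Finite rooted typed trees and the two-type Galton–Watson tree -/

/-- Finite rooted trees whose vertices carry a type in `ℤ` (used with types `±1`). -/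
inductive GWT : Type
  | node : ℤ → List GWT → GWT

instance : Inhabited GWT := ⟨.node 0 []⟩

/-- The type of the root. -/
def GWT.typeOf : GWT → ℤ
  | .node s _ => s

/-- The subtrees pending on the children of the root. -/
def GWT.childrenOf : GWT → List GWT
  | .node _ l => l

/-- Valid positions (vertices) of a tree, encoded as lists of child indices. -/
def GWT.valid : GWT → List ℕ → Prop
  | _, [] => True
  | T, i :: p => i < T.childrenOf.length ∧ GWT.valid (T.childrenOf.getD i default) p

/-- The type of the vertex at position `q`. -/
def GWT.typeAt : GWT → List ℕ → ℤ
  | T, [] => T.typeOf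
  | T, i :: p => GWT.typeAt (T.childrenOf.getD i default) p

/-- The tree as a simple graph on its set of positions. -/
def GWT.graph (T : GWT) : SimpleGraph { p : List ℕ // T.valid p } where
  Adj a b := (∃ i : ℕ, (b : List ℕ) = (a : List ℕ) ++ [i]) ∨
             (∃ i : ℕ, (a : List ℕ) = (b : List ℕ) ++ [i])
  symm := ⟨fun a b h => h.symm⟩
  loopless := ⟨fun a h => by
    rcases h with ⟨i, hi⟩ | ⟨i, hi⟩ <;>
      · have := congrArg List.length hi
        simp at this⟩

/-- The root of the tree. -/
def GWT.root (T : GWT) : { p : List ℕ // T.valid p } := ⟨[], trivial⟩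

/-- The type labelling of the vertices. -/
def GWT.lab (T : GWT) : { p : List ℕ // T.valid p } → ℤ := fun q => T.typeAt q.1

/-- The Warning Propagation message `μ_{r↑}(t)` sent by the root of a tree towards its
(imaginary) parent, when the messages are initialised with the types. -/
def GWT.rootMsg : ℕ → GWT → ℤ
  | 0, T => T.typeOf
  | t + 1, T => psiZ ((T.childrenOf.map (GWT.rootMsg t)).sum)

/-- The probability mass function of the depth-`t` truncation of the two-type Galton–Watson
tree with root type `s`, realised as a random *ordered* tree: the root spawns `Po(d₊ + d₋)`
children, each independently of type `s` with probability `d₊/(d₊+d₋)` and of type `-s`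
with probability `d₋/(d₊+d₋)`, and the subtrees pending on the children are independent
Galton–Watson trees truncated at depth `t-1`. -/
def ogwMass (dp dm : ℝ) : ℕ → ℤ → GWT → ℝ
  | 0, s, T => if T.typeOf = s ∧ T.childrenOf = [] then 1 else 0
  | t + 1, s, T =>
    if T.typeOf = s then
      Real.exp (-(dp + dm)) / (Nat.factorial T.childrenOf.length) *
        (T.childrenOf.map fun U => (if U.typeOf = s then dp else dm)
          * ogwMass dp dm t U.typeOf U).prod
    else 0

end

/-!
Condition on `γ₊ = k` and `γ₋ = l`, so that `Z_p` is a sum of `k` copies of `η` minus `l` copies.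
If `k ≥ l + 3`, then `Z_p < 1` forces two of the first `k` summands to differ from `1`, which has
probability at most `(k (1 - p(1)))²`; averaged over `γ₊ ~ Po(d₊)` this is
`(d₊² + d₊)(1 - p(1))² ≤ 2 d₊⁻¹⁸`. The event `γ₊ ≤ γ₋ + 2` is handled by a Chernoff bound:
its probability is at most `e^{2θ} E[e^{-θγ₊}] E[e^{θγ₋}] = exp(2θ + d₊(e^{-θ} - 1) + d₋(e^θ - 1))`,
and `θ = (d₊ - d₋) / (4 d₊)` brings the exponent below `1/2 - (d₊ - d₋)² / (8 d₊) ≤ 1/2 - 32 ln d₊`.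
The bound on `ψ(Z_p) = 1` is the complement, as the law of `Z_p` has total mass `1`.
-/

open scoped Pointwise

lemma poisP_nonneg {d : ℝ} (hd : 0 ≤ d) (k : ℕ) : 0 ≤ poisP d k := by
  unfold poisP
  positivity

lemma hasSum_poisP_mul_exp (d s : ℝ) :
    HasSum (fun k : ℕ => poisP d k * Real.exp (s * k)) (Real.exp (d * (Real.exp s - 1))) := by
  have h := (NormedSpace.expSeries_div_hasSum_exp (d * Real.exp s)).mul_left (Real.exp (-d))
  rw [← Real.exp_eq_exp_ℝ, ← Real.exp_add, show -d + d * Real.exp s = d * (Real.exp s - 1) by ring]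
    at h
  refine h.congr_fun fun k => ?_
  rw [poisP, mul_comm s, Real.exp_nat_mul, mul_pow]
  ring

lemma hasSum_poisP (d : ℝ) : HasSum (poisP d) 1 := by
  simpa using hasSum_poisP_mul_exp d 0

lemma hasSum_poisP_mul_poisP (dp dm : ℝ) (k : ℕ) :
    HasSum (fun l => poisP dp k * poisP dm l) (poisP dp k) := by
  simpa using (hasSum_poisP dm).mul_left (poisP dp k)

lemma poisP_succ_mul (d : ℝ) (k : ℕ) : poisP d (k + 1) * (k + 1) = d * poisP d k := by
  simp only [poisP, Nat.factorial_succ]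
  push_cast
  field_simp
  ring

lemma HasSum.poisP_mul_natCast_mul {d a : ℝ} {g : ℕ → ℝ}
    (h : HasSum (fun k => poisP d k * g (k + 1)) a) :
    HasSum (fun k : ℕ => poisP d k * (k * g k)) (d * a) := by
  rw [← hasSum_nat_add_iff' 1, Finset.sum_range_one, Nat.cast_zero, zero_mul, mul_zero, sub_zero]
  refine (h.mul_left d).congr_fun fun k => ?_
  push_cast
  rw [← mul_assoc, ← mul_assoc, poisP_succ_mul, mul_assoc]

lemma hasSum_poisP_mul_sq (d : ℝ) :
    HasSum (fun k : ℕ => poisP d k * (k : ℝ) ^ 2) (d ^ 2 + d) := by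
  have hmean : HasSum (fun k : ℕ => poisP d k * k) d := by
    have h := HasSum.poisP_mul_natCast_mul (g := fun _ => (1 : ℝ))
      ((hasSum_poisP d).congr_fun fun k => mul_one _)
    simpa using h
  have h : HasSum (fun k => poisP d k * ((k + 1 : ℕ) : ℝ)) (d + 1) :=
    (hmean.add (hasSum_poisP d)).congr_fun fun k => by push_cast; ring
  rw [show d ^ 2 + d = d * (d + 1) by ring]
  exact (h.poisP_mul_natCast_mul (g := fun k => (k : ℝ))).congr_fun fun k => by ring

section MassFunctions

structure IsPMFOn (a : ℤ → ℝ) (s : Finset ℤ) : Prop where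
  nonneg : ∀ z, 0 ≤ a z
  eq_zero_of_notMem : ∀ z ∉ s, a z = 0
  hasSum : HasSum a 1

variable {a b : ℤ → ℝ} {s t : Finset ℤ}

lemma IsPMFOn.mono (ha : IsPMFOn a s) (hst : s ⊆ t) : IsPMFOn a t :=
  ⟨ha.nonneg, fun z hz => ha.eq_zero_of_notMem z fun hzs => hz (hst hzs), ha.hasSum⟩

lemma IsPMFOn.sum_eq_one (ha : IsPMFOn a s) : ∑ z ∈ s, a z = 1 :=
  (ha.hasSum.unique (hasSum_sum_of_ne_finset_zero ha.eq_zero_of_notMem)).symm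

lemma IsPMFOn.tsum_comp_le_one {β : Type*} (ha : IsPMFOn a s) {ι : β → ℤ}
    (hι : Function.Injective ι) : ∑' x, a (ι x) ≤ 1 :=
  ha.hasSum.tsum_eq ▸ Summable.tsum_le_tsum_of_inj ι hι (fun z _ => ha.nonneg z) (fun _ => le_rfl)
    (ha.hasSum.summable.comp_injective hι) ha.hasSum.summable

lemma sum_Icc_neg_one_one (f : ℤ → ℝ) :
    ∑ z ∈ Finset.Icc (-1 : ℤ) 1, f z = f (-1) + f 0 + f 1 := by
  rw [show Finset.Icc (-1 : ℤ) 1 = {-1, 0, 1} by rfl, Finset.sum_insert (by decide),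
    Finset.sum_insert (by decide), Finset.sum_singleton, add_assoc]

lemma IsProbOn3.isPMFOn {p : ℤ → ℝ} (hp : IsProbOn3 p) : IsPMFOn p (Finset.Icc (-1) 1) := by
  have hsupp : ∀ z ∉ Finset.Icc (-1) 1, p z = 0 := by
    intro z hz
    refine hp.2.1 z ?_
    simp only [Finset.mem_Icc, Set.mem_insert_iff, Set.mem_singleton_iff] at hz ⊢
    omega
  refine ⟨hp.1, hsupp, ?_⟩
  simpa [sum_Icc_neg_one_one, hp.2.2] using hasSum_sum_of_ne_finset_zero hsupp

lemma IsProbOn3.one_sub_nonneg {p : ℤ → ℝ} (hp : IsProbOn3 p) : 0 ≤ 1 - p 1 := by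
  linarith [hp.2.2, hp.1 (-1), hp.1 0]

lemma IsProbOn3.flipM {p : ℤ → ℝ} (hp : IsProbOn3 p) : IsProbOn3 (flipM p) := by
  refine ⟨fun z => hp.1 (-z), fun z hz => hp.2.1 (-z) ?_, ?_⟩
  · simp only [Set.mem_insert_iff, Set.mem_singleton_iff] at hz ⊢
    omega
  · show p (-(-1)) + p (-0) + p (-1) = 1
    rw [neg_neg, neg_zero]
    linarith [hp.2.2]

lemma convZ_eq_sum_right (hb : ∀ z ∉ t, b z = 0) (z : ℤ) :
    convZ a b z = ∑ y ∈ t, a (z - y) * b y := by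
  rw [convZ, ← (Equiv.subLeft z).tsum_eq]
  simp only [Equiv.subLeft_apply, sub_sub_cancel]
  exact tsum_eq_sum fun y hy => by rw [hb y hy, mul_zero]

lemma isPMFOn_convZ (ha : IsPMFOn a s) (hb : IsPMFOn b t) : IsPMFOn (convZ a b) (s + t) := by
  have hsupp : ∀ z ∉ s + t, convZ a b z = 0 := fun z hz => by
    rw [convZ_eq_sum_right hb.eq_zero_of_notMem]
    refine Finset.sum_eq_zero fun y hy => ?_
    rw [ha.eq_zero_of_notMem _ fun hzy => hz (Finset.mem_add.2 ⟨_, hzy, y, hy, sub_add_cancel z y⟩),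
      zero_mul]
  refine ⟨fun z => ?_, hsupp, ?_⟩
  · rw [convZ_eq_sum_right hb.eq_zero_of_notMem]
    exact Finset.sum_nonneg fun y _ => mul_nonneg (ha.nonneg _) (hb.nonneg y)
  · have hrow : ∀ y, HasSum (fun z => a (z - y) * b y) (b y) := fun y => by
      simpa using ((Equiv.subRight y).hasSum_iff.2 ha.hasSum).mul_right (b y)
    have h : HasSum (fun z => ∑ y ∈ t, a (z - y) * b y) (∑ y ∈ t, b y) :=
      hasSum_sum fun y _ => hrow y
    rw [hb.sum_eq_one] at h
    exact h.congr_fun fun z => convZ_eq_sum_right hb.eq_zero_of_notMem z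

lemma isPMFOn_convPow (ha : IsPMFOn a (Finset.Icc (-1) 1)) (k : ℕ) :
    IsPMFOn (convPow a k) (Finset.Icc (-(k : ℤ)) k) := by
  induction k with
  | zero =>
    refine ⟨fun z => ?_, fun z hz => if_neg ?_, hasSum_ite_eq 0 1⟩
    · show (0 : ℝ) ≤ if z = 0 then 1 else 0
      positivity
    · simpa using hz
  | succ k ih =>
    refine (isPMFOn_convZ ih ha).mono fun z hz => ?_
    obtain ⟨x, hx, y, hy, rfl⟩ := Finset.mem_add.1 hz
    simp only [Finset.mem_Icc] at hx hy ⊢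
    push_cast
    omega

end MassFunctions

section LowerTail

noncomputable def lowerTail (a : ℤ → ℝ) (t : ℤ) : ℝ := ∑' m : ℕ, a (t - m)

variable {a b : ℤ → ℝ} {s t : Finset ℤ}

lemma sub_natCast_injective (x : ℤ) : Function.Injective fun m : ℕ => x - m :=
  fun m n h => by simpa using h

lemma IsPMFOn.summable_comp_sub (ha : IsPMFOn a s) (x : ℤ) : Summable fun m : ℕ => a (x - m) :=
  ha.hasSum.summable.comp_injective (sub_natCast_injective x)

lemma IsPMFOn.lowerTail_nonneg (ha : IsPMFOn a s) (x : ℤ) : 0 ≤ lowerTail a x :=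
  tsum_nonneg fun _ => ha.nonneg _

lemma IsPMFOn.lowerTail_le_one (ha : IsPMFOn a s) (x : ℤ) : lowerTail a x ≤ 1 :=
  ha.tsum_comp_le_one (sub_natCast_injective x)

lemma IsPMFOn.lowerTail_mono (ha : IsPMFOn a s) {x y : ℤ} (hxy : x ≤ y) :
    lowerTail a x ≤ lowerTail a y := by
  obtain ⟨n, rfl⟩ : ∃ n : ℕ, y = x + n := ⟨(y - x).toNat, by omega⟩
  refine Summable.tsum_le_tsum_of_inj (· + n) (add_left_injective n) (fun _ _ => ha.nonneg _)
    (fun m => le_of_eq ?_) (ha.summable_comp_sub x) (ha.summable_comp_sub _)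
  push_cast
  ring_nf

lemma lowerTail_convZ (ha : IsPMFOn a s) (hb : ∀ z ∉ t, b z = 0) (x : ℤ) :
    lowerTail (convZ a b) x = ∑ y ∈ t, b y * lowerTail a (x - y) := by
  have hterm : ∀ m : ℕ, convZ a b (x - m) = ∑ y ∈ t, a (x - y - m) * b y := fun m => by
    simp only [convZ_eq_sum_right hb, sub_right_comm]
  rw [lowerTail, tsum_congr hterm,
    Summable.tsum_finsetSum fun y _ => (ha.summable_comp_sub (x - y)).mul_right (b y)]
  exact Finset.sum_congr rfl fun y _ => by rw [tsum_mul_right, mul_comm, lowerTail]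

lemma lowerTail_convZ_le (ha : IsPMFOn a s) (hb : IsPMFOn b t) {l : ℤ} (hl : ∀ y ∈ t, -l ≤ y)
    (x : ℤ) : lowerTail (convZ a b) x ≤ lowerTail a (x + l) := by
  rw [lowerTail_convZ ha hb.eq_zero_of_notMem]
  calc ∑ y ∈ t, b y * lowerTail a (x - y)
      ≤ ∑ y ∈ t, b y * lowerTail a (x + l) := Finset.sum_le_sum fun y hy =>
        mul_le_mul_of_nonneg_left (ha.lowerTail_mono (by linarith [hl y hy])) (hb.nonneg y)
    _ = lowerTail a (x + l) := by rw [← Finset.sum_mul, hb.sum_eq_one, one_mul]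

lemma lowerTail_convPow_zero_of_neg {x : ℤ} (hx : x < 0) : lowerTail (convPow a 0) x = 0 := by
  simp [lowerTail, convPow, show ∀ m : ℕ, x - m ≠ 0 from fun m => by omega]

lemma tsum_one_add_natCast_add_lowerTail_zero {f : ℤ → ℝ} (hf : Summable f) :
    ∑' m : ℕ, f (1 + m) + lowerTail f 0 = ∑' z, f z := by
  have hneg : Summable fun n : ℕ => f (-n) :=
    hf.comp_injective fun m n h => by simpa using h
  have hpos : Summable fun n : ℕ => f (1 + n) :=
    hf.comp_injective fun m n h => by simpa using h
  rw [← (Equiv.neg ℤ).tsum_eq]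
  simp only [Equiv.neg_apply]
  rw [tsum_of_nat_of_neg_add_one (f := fun z => f (-z)) hneg (by simpa [add_comm] using hpos)]
  simp [lowerTail, add_comm]

variable {p : ℤ → ℝ}

lemma lowerTail_convPow_succ_le (hp : IsProbOn3 p) (k : ℕ) (x : ℤ) :
    lowerTail (convPow p (k + 1)) x
      ≤ (1 - p 1) * lowerTail (convPow p k) (x + 1) + p 1 * lowerTail (convPow p k) (x - 1) := by
  have ha := isPMFOn_convPow hp.isPMFOn k
  have hmono : p 0 * lowerTail (convPow p k) x ≤ p 0 * lowerTail (convPow p k) (x + 1) :=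
    mul_le_mul_of_nonneg_left (ha.lowerTail_mono (by omega)) (hp.1 0)
  rw [show convPow p (k + 1) = convZ (convPow p k) p from rfl,
    lowerTail_convZ ha hp.isPMFOn.eq_zero_of_notMem, sum_Icc_neg_one_one, sub_neg_eq_add,
    sub_zero, show 1 - p 1 = p (-1) + p 0 by linarith [hp.2.2]]
  linarith

lemma lowerTail_convPow_sub_one_le (hp : IsProbOn3 p) (k : ℕ) :
    lowerTail (convPow p k) (k - 1) ≤ k * (1 - p 1) := by
  induction k with
  | zero => simp [lowerTail_convPow_zero_of_neg]
  | succ k ih =>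
    have ha := isPMFOn_convPow hp.isPMFOn k
    have hq := hp.one_sub_nonneg
    calc lowerTail (convPow p (k + 1)) ((k + 1 : ℕ) - 1)
        ≤ (1 - p 1) * lowerTail (convPow p k) (k + 1) + p 1 * lowerTail (convPow p k) (k - 1) := by
          simpa using lowerTail_convPow_succ_le hp k k
      _ ≤ (1 - p 1) * 1 + 1 * (k * (1 - p 1)) := by
          gcongr
          · exact ha.lowerTail_le_one _
          · exact ha.lowerTail_nonneg _
          · linarith
      _ = (k + 1 : ℕ) * (1 - p 1) := by push_cast; ring

lemma lowerTail_convPow_sub_three_le (hp : IsProbOn3 p) (k : ℕ) :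
    lowerTail (convPow p k) (k - 3) ≤ (k * (1 - p 1)) ^ 2 := by
  induction k with
  | zero => simp [lowerTail_convPow_zero_of_neg]
  | succ k ih =>
    have ha := isPMFOn_convPow hp.isPMFOn k
    have hq := hp.one_sub_nonneg
    calc lowerTail (convPow p (k + 1)) ((k + 1 : ℕ) - 3)
        ≤ (1 - p 1) * lowerTail (convPow p k) (k - 1) + p 1 * lowerTail (convPow p k) (k - 3) := by
          have h := lowerTail_convPow_succ_le hp k (k - 2)
          rwa [show (k : ℤ) - 2 + 1 = k - 1 by ring, show (k : ℤ) - 2 - 1 = k - 3 by ring,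
            ← show ((k + 1 : ℕ) : ℤ) - 3 = k - 2 by push_cast; ring] at h
      _ ≤ (1 - p 1) * (k * (1 - p 1)) + 1 * (k * (1 - p 1)) ^ 2 := by
          gcongr
          · exact lowerTail_convPow_sub_one_le hp k
          · exact ha.lowerTail_nonneg _
          · linarith
      _ ≤ ((k + 1 : ℕ) * (1 - p 1)) ^ 2 := by
          push_cast
          nlinarith [sq_nonneg (1 - p 1)]

end LowerTail

section DoubleSeries

variable {f g : ℕ → ℕ → ℝ}

lemma summable_tsum_of_nonneg_of_le (hf : ∀ k l, 0 ≤ f k l) (hfg : ∀ k l, f k l ≤ g k l)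
    (hg : ∀ k, Summable (g k)) (hg' : Summable fun k => ∑' l, g k l) :
    (∀ k, Summable (f k)) ∧ Summable fun k => ∑' l, f k l := by
  have hfs k : Summable (f k) := (hg k).of_nonneg_of_le (hf k) (hfg k)
  exact ⟨hfs, hg'.of_nonneg_of_le (fun k => tsum_nonneg (hf k))
    fun k => (hfs k).tsum_le_tsum (hfg k) (hg k)⟩

lemma tsum_tsum_le_tsum_tsum (hf : ∀ k l, 0 ≤ f k l) (hfg : ∀ k l, f k l ≤ g k l)
    (hg : ∀ k, Summable (g k)) (hg' : Summable fun k => ∑' l, g k l) :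
    ∑' k, ∑' l, f k l ≤ ∑' k, ∑' l, g k l :=
  have hfs := summable_tsum_of_nonneg_of_le hf hfg hg hg'
  hfs.2.tsum_le_tsum (fun k => (hfs.1 k).tsum_le_tsum (hfg k) (hg k)) hg'

lemma ofReal_tsum_tsum_of_le (hf : ∀ k l, 0 ≤ f k l) (hfg : ∀ k l, f k l ≤ g k l)
    (hg : ∀ k, Summable (g k)) (hg' : Summable fun k => ∑' l, g k l) :
    ENNReal.ofReal (∑' k, ∑' l, f k l) = ∑' k, ∑' l, ENNReal.ofReal (f k l) := by
  have hfs := summable_tsum_of_nonneg_of_le hf hfg hg hg'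
  rw [ENNReal.ofReal_tsum_of_nonneg (fun k => tsum_nonneg (hf k)) hfs.2]
  exact tsum_congr fun k => ENNReal.ofReal_tsum_of_nonneg (hf k) (hfs.1 k)

lemma hasSum_of_tsum_ofReal_eq {β : Type*} {h : β → ℝ} {a : ℝ} (hh : ∀ b, 0 ≤ h b) (ha : 0 ≤ a)
    (hsum : ∑' b, ENNReal.ofReal (h b) = ENNReal.ofReal a) : HasSum h a := by
  have h' := ENNReal.hasSum_toReal (hsum ▸ ENNReal.ofReal_ne_top)
  rw [← ENNReal.tsum_toReal_eq fun _ => ENNReal.ofReal_ne_top, hsum, ENNReal.toReal_ofReal ha] at h'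
  simpa [ENNReal.toReal_ofReal, hh] using h'

theorem hasSum_tsum_tsum_mul {β : Type*} {u : ℕ → ℕ → ℝ} {w : ℕ → ℕ → β → ℝ} {W : ℕ → ℕ → ℝ}
    (hu : ∀ k l, 0 ≤ u k l) (hus : ∀ k, Summable (u k)) (hus' : Summable fun k => ∑' l, u k l)
    (hw : ∀ k l b, 0 ≤ w k l b) (hW : ∀ k l, HasSum (w k l) (W k l)) (hW1 : ∀ k l, W k l ≤ 1) :
    HasSum (fun b => ∑' k, ∑' l, u k l * w k l b) (∑' k, ∑' l, u k l * W k l) := by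
  have hw1 k l b : w k l b ≤ 1 :=
    (le_hasSum (hW k l) b fun b' _ => hw k l b').trans (hW1 k l)
  have hW0 k l : 0 ≤ W k l := (hW k l).nonneg (hw k l)
  refine hasSum_of_tsum_ofReal_eq
    (fun b => tsum_nonneg fun k => tsum_nonneg fun l => mul_nonneg (hu k l) (hw k l b))
    (tsum_nonneg fun k => tsum_nonneg fun l => mul_nonneg (hu k l) (hW0 k l)) ?_
  calc ∑' b, ENNReal.ofReal (∑' k, ∑' l, u k l * w k l b)
      = ∑' b, ∑' k, ∑' l, ENNReal.ofReal (u k l * w k l b) := tsum_congr fun b =>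
        ofReal_tsum_tsum_of_le (fun k l => mul_nonneg (hu k l) (hw k l b))
          (fun k l => mul_le_of_le_one_right (hu k l) (hw1 k l b)) hus hus'
    _ = ∑' k, ∑' l, ∑' b, ENNReal.ofReal (u k l * w k l b) := by
        rw [ENNReal.tsum_comm]
        exact tsum_congr fun k => ENNReal.tsum_comm
    _ = ∑' k, ∑' l, ENNReal.ofReal (u k l * W k l) := by
        refine tsum_congr fun k => tsum_congr fun l => ?_
        rw [← ENNReal.ofReal_tsum_of_nonneg (fun b => mul_nonneg (hu k l) (hw k l b))
          ((hW k l).summable.mul_left _), ((hW k l).mul_left (u k l)).tsum_eq]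
    _ = ENNReal.ofReal (∑' k, ∑' l, u k l * W k l) :=
        (ofReal_tsum_tsum_of_le (fun k l => mul_nonneg (hu k l) (hW0 k l))
          (fun k l => mul_le_of_le_one_right (hu k l) (hW1 k l)) hus hus').symm

end DoubleSeries

section Z

/-- The law of `Z_p` given `γ₊ = k` and `γ₋ = l`. -/
noncomputable def condZ (p : ℤ → ℝ) (k l : ℕ) : ℤ → ℝ :=
  convZ (convPow p k) (convPow (flipM p) l)

variable {dp dm θ : ℝ} {p : ℤ → ℝ}

lemma isPMFOn_condZ (hp : IsProbOn3 p) (k l : ℕ) :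
    IsPMFOn (condZ p k l) (Finset.Icc (-(k : ℤ)) k + Finset.Icc (-(l : ℤ)) l) :=
  isPMFOn_convZ (isPMFOn_convPow hp.isPMFOn k) (isPMFOn_convPow hp.flipM.isPMFOn l)

lemma lowerTail_condZ_le (hp : IsProbOn3 p) (hθ : 0 ≤ θ) (k l : ℕ) :
    lowerTail (condZ p k l) 0 ≤ Real.exp (θ * (l + 2 - k)) + (k * (1 - p 1)) ^ 2 := by
  have hcond := isPMFOn_condZ hp k l
  by_cases hkl : k ≤ l + 2
  · have hkl' : (k : ℝ) ≤ l + 2 := by exact_mod_cast hkl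
    have hexp : 1 ≤ Real.exp (θ * (l + 2 - k)) := Real.one_le_exp (mul_nonneg hθ (by linarith))
    linarith [hcond.lowerTail_le_one 0, sq_nonneg (k * (1 - p 1))]
  · have ha := isPMFOn_convPow hp.isPMFOn k
    calc lowerTail (condZ p k l) 0
        ≤ lowerTail (convPow p k) (0 + l) :=
          lowerTail_convZ_le ha (isPMFOn_convPow hp.flipM.isPMFOn l)
            (fun y hy => (Finset.mem_Icc.1 hy).1) 0
      _ ≤ lowerTail (convPow p k) (k - 3) := ha.lowerTail_mono (by omega)
      _ ≤ (k * (1 - p 1)) ^ 2 := lowerTail_convPow_sub_three_le hp k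
      _ ≤ Real.exp (θ * (l + 2 - k)) + (k * (1 - p 1)) ^ 2 :=
          le_add_of_nonneg_left (Real.exp_nonneg _)

lemma hasSum_Zdist_comp {β : Type*} (hdp : 0 ≤ dp) (hdm : 0 ≤ dm) (hp : IsProbOn3 p)
    {ι : β → ℤ} (hι : Function.Injective ι) :
    HasSum (fun b => Zdist dp dm p (ι b))
      (∑' k, ∑' l, poisP dp k * poisP dm l * ∑' b, condZ p k l (ι b)) :=
  hasSum_tsum_tsum_mul (w := fun k l b => condZ p k l (ι b))
    (fun k l => mul_nonneg (poisP_nonneg hdp k) (poisP_nonneg hdm l))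
    (fun k => (hasSum_poisP_mul_poisP dp dm k).summable)
    (by simpa only [(hasSum_poisP_mul_poisP dp dm _).tsum_eq] using (hasSum_poisP dp).summable)
    (fun k l b => (isPMFOn_condZ hp k l).nonneg _)
    (fun k l => ((isPMFOn_condZ hp k l).hasSum.summable.comp_injective hι).hasSum)
    (fun k l => (isPMFOn_condZ hp k l).tsum_comp_le_one hι)

lemma hasSum_Zdist (hdp : 0 ≤ dp) (hdm : 0 ≤ dm) (hp : IsProbOn3 p) :
    HasSum (Zdist dp dm p) 1 := by
  have h := hasSum_Zdist_comp hdp hdm hp Function.injective_id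
  simp only [id, (isPMFOn_condZ hp _ _).hasSum.tsum_eq, mul_one,
    (hasSum_poisP_mul_poisP dp dm _).tsum_eq, (hasSum_poisP dp).tsum_eq] at h
  exact h

end Z

section Chernoff

variable {dp dm θ q : ℝ}

lemma hasSum_poisP_mul_poisP_mul_majorant (dp dm θ q : ℝ) (k : ℕ) :
    HasSum (fun l : ℕ => poisP dp k * poisP dm l * (Real.exp (θ * (l + 2 - k)) + (k * q) ^ 2))
      (poisP dp k * Real.exp (θ * (2 - k)) * Real.exp (dm * (Real.exp θ - 1))
        + poisP dp k * (k * q) ^ 2) := by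
  have h := ((hasSum_poisP_mul_exp dm θ).mul_left (poisP dp k * Real.exp (θ * (2 - k)))).add
    ((hasSum_poisP dm).mul_left (poisP dp k * (k * q) ^ 2))
  rw [mul_one] at h
  refine h.congr_fun fun l => ?_
  rw [show θ * (l + 2 - k) = θ * (2 - k) + θ * l by ring, Real.exp_add]
  ring

lemma hasSum_poisP_mul_majorant (dp dm θ q : ℝ) :
    HasSum (fun k : ℕ => poisP dp k * Real.exp (θ * (2 - k)) * Real.exp (dm * (Real.exp θ - 1))
        + poisP dp k * (k * q) ^ 2)
      (Real.exp (2 * θ) * Real.exp (dm * (Real.exp θ - 1)) * Real.exp (dp * (Real.exp (-θ) - 1))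
        + (dp ^ 2 + dp) * q ^ 2) := by
  have h := ((hasSum_poisP_mul_exp dp (-θ)).mul_left
    (Real.exp (2 * θ) * Real.exp (dm * (Real.exp θ - 1)))).add
    ((hasSum_poisP_mul_sq dp).mul_right (q ^ 2))
  refine h.congr_fun fun k => ?_
  rw [show θ * (2 - k) = 2 * θ + -θ * k by ring, Real.exp_add]
  ring

lemma poisson_exponent_le (hdm : 0 ≤ dm) (hlt : dm ≤ dp) (hθ : |θ| ≤ 1) :
    dp * (Real.exp (-θ) - 1) + dm * (Real.exp θ - 1) ≤ -((dp - dm) * θ) + 2 * dp * θ ^ 2 := by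
  have hneg := (abs_le.1 (Real.abs_exp_sub_one_sub_id_le (x := -θ) (by rwa [abs_neg]))).2
  have hpos := (abs_le.1 (Real.abs_exp_sub_one_sub_id_le hθ)).2
  rw [neg_sq] at hneg
  nlinarith [mul_le_mul_of_nonneg_left hneg (hdm.trans hlt), mul_le_mul_of_nonneg_left hpos hdm,
    mul_le_mul_of_nonneg_right hlt (sq_nonneg θ)]

lemma chernoff_le (hdm : 0 < dm) (hlt : dm < dp) (hdp : 2 ≤ dp)
    (hgap : 16 * Real.sqrt (dp * Real.log dp) ≤ dp - dm) (hθ : θ = (dp - dm) / (4 * dp)) :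
    Real.exp (2 * θ) * Real.exp (dm * (Real.exp θ - 1)) * Real.exp (dp * (Real.exp (-θ) - 1))
      ≤ (dp ^ 10)⁻¹ / 2 := by
  have hdp0 : 0 < dp := by linarith
  have hθ0 : 0 ≤ θ := hθ ▸ div_nonneg (by linarith) (by positivity)
  have hθ4 : θ ≤ 1 / 4 := by rw [hθ, div_le_iff₀ (by positivity)]; linarith
  have hsq : 256 * (dp * Real.log dp) ≤ (dp - dm) ^ 2 := by
    have h := pow_le_pow_left₀ (by positivity) hgap 2
    rw [mul_pow, Real.sq_sqrt (mul_nonneg hdp0.le (Real.log_nonneg (by linarith)))] at h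
    linarith
  have hquad : -((dp - dm) * θ) + 2 * dp * θ ^ 2 = -((dp - dm) ^ 2 / (8 * dp)) := by
    rw [hθ]
    field_simp
    ring
  have hlog : 32 * Real.log dp ≤ (dp - dm) ^ 2 / (8 * dp) := by
    rw [le_div_iff₀ (by positivity)]
    linarith
  have hexponent := poisson_exponent_le (θ := θ) hdm.le hlt.le (abs_le.2 ⟨by linarith, by linarith⟩)
  have hpow : Real.exp (32 * Real.log dp) = dp ^ 32 := by
    rw [show (32 : ℝ) = (32 : ℕ) by norm_num, Real.exp_nat_mul, Real.exp_log hdp0]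
  have h22 : (6 : ℝ) ≤ dp ^ 22 := le_trans (by norm_num) (pow_le_pow_left₀ (by norm_num) hdp 22)
  calc _ ≤ Real.exp (1 / 2 - 32 * Real.log dp) := by
        rw [← Real.exp_add, ← Real.exp_add]
        exact Real.exp_le_exp.2 (by linarith)
    _ = Real.exp (1 / 2) / dp ^ 32 := by rw [Real.exp_sub, hpow]
    _ ≤ 3 / dp ^ 32 := by
        gcongr
        linarith [Real.exp_le_exp.2 (show (1 / 2 : ℝ) ≤ 1 by norm_num), Real.exp_one_lt_d9]
    _ ≤ (dp ^ 10)⁻¹ / 2 := by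
        rw [div_le_iff₀ (by positivity), show dp ^ 32 = dp ^ 10 * dp ^ 22 by ring]
        field_simp
        linarith

lemma second_moment_term_le (hdp : 2 ≤ dp) (hq0 : 0 ≤ q) (hq : q ≤ (dp ^ 10)⁻¹) :
    (dp ^ 2 + dp) * q ^ 2 ≤ (dp ^ 10)⁻¹ / 2 := by
  have hdp0 : 0 < dp := by linarith
  have h8 : (4 : ℝ) ≤ dp ^ 8 := le_trans (by norm_num) (pow_le_pow_left₀ (by norm_num) hdp 8)
  calc (dp ^ 2 + dp) * q ^ 2 ≤ (2 * dp ^ 2) * ((dp ^ 10)⁻¹) ^ 2 := by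
        gcongr
        nlinarith
    _ ≤ (dp ^ 10)⁻¹ / 2 := by
        rw [show (2 * dp ^ 2) * ((dp ^ 10)⁻¹) ^ 2 = (dp ^ 10)⁻¹ * (2 / dp ^ 8) by field_simp,
          div_eq_mul_one_div _ 2]
        refine mul_le_mul_of_nonneg_left ?_ (by positivity)
        rw [div_le_div_iff₀ (by positivity) (by norm_num)]
        linarith

end Chernoff

lemma lowerTail_Zdist_le {dp dm : ℝ} {p : ℤ → ℝ} (hdm : 0 < dm) (hlt : dm < dp) (hdp : 2 ≤ dp)
    (hgap : 16 * Real.sqrt (dp * Real.log dp) ≤ dp - dm) (hp : IsProbOn3 p) (hsk : Skewed dp p) :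
    lowerTail (Zdist dp dm p) 0 ≤ (dp ^ 10)⁻¹ := by
  set θ := (dp - dm) / (4 * dp)
  set q := 1 - p 1
  have hdp0 : 0 < dp := by linarith
  have hθ : 0 ≤ θ := div_nonneg (by linarith) (by positivity)
  have hq : q ≤ (dp ^ 10)⁻¹ := by linarith [show 1 - (dp ^ 10)⁻¹ ≤ p 1 from hsk]
  have hq0 : 0 ≤ q := hp.one_sub_nonneg
  have hPQ k l : 0 ≤ poisP dp k * poisP dm l :=
    mul_nonneg (poisP_nonneg hdp0.le k) (poisP_nonneg hdm.le l)
  have hinner := hasSum_poisP_mul_poisP_mul_majorant dp dm θ q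
  have houter := hasSum_poisP_mul_majorant dp dm θ q
  calc lowerTail (Zdist dp dm p) 0
      = ∑' k, ∑' l, poisP dp k * poisP dm l * lowerTail (condZ p k l) 0 :=
        (hasSum_Zdist_comp hdp0.le hdm.le hp (sub_natCast_injective 0)).tsum_eq
    _ ≤ ∑' k, ∑' l, poisP dp k * poisP dm l * (Real.exp (θ * (l + 2 - k)) + (k * q) ^ 2) :=
        tsum_tsum_le_tsum_tsum
          (fun k l => mul_nonneg (hPQ k l) ((isPMFOn_condZ hp k l).lowerTail_nonneg 0))
          (fun k l => mul_le_mul_of_nonneg_left (lowerTail_condZ_le hp hθ k l) (hPQ k l))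
          (fun k => (hinner k).summable)
          (by simpa only [(hinner _).tsum_eq] using houter.summable)
    _ = Real.exp (2 * θ) * Real.exp (dm * (Real.exp θ - 1)) * Real.exp (dp * (Real.exp (-θ) - 1))
          + (dp ^ 2 + dp) * q ^ 2 := by
        simp only [(hinner _).tsum_eq]
        exact houter.tsum_eq
    _ ≤ (dp ^ 10)⁻¹ := by
        linarith [chernoff_le hdm hlt hdp hgap rfl, second_moment_term_le hdp hq0 hq]

/-- Display (12) in the proof of Lemma 4.1: for skewed `p`, `P(Z_p < 1) ≤ d₊⁻¹⁰`;
equivalently `P(ψ(Z_p) = 1) ≥ 1 - d₊⁻¹⁰`. -/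
theorem Z_rarely_small :
    ∃ c : ℝ, 0 < c ∧ ∃ D : ℝ, ∀ dp dm : ℝ,
    0 < dm → dm < dp → D ≤ dp → c * Real.sqrt (dp * Real.log dp) ≤ dp - dm →
    ∀ p : ℤ → ℝ, IsProbOn3 p → Skewed dp p →
      (∑' m : ℕ, Zdist dp dm p (-(m : ℤ))) ≤ (dp ^ 10)⁻¹ ∧
      1 - (dp ^ 10)⁻¹ ≤ Twp dp dm p 1 := by
  refine ⟨16, by norm_num, 2, fun dp dm hdm hlt hdp hgap p hp hsk => ?_⟩
  have hlow := lowerTail_Zdist_le hdm hlt hdp hgap hp hsk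
  have hZ := hasSum_Zdist (dp := dp) (by linarith) hdm.le hp
  have hsplit := tsum_one_add_natCast_add_lowerTail_zero hZ.summable
  refine ⟨by simpa [lowerTail] using hlow, ?_⟩
  rw [Twp, if_pos rfl]
  linarith [hZ.tsum_eq]
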